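/- arXiv:0810.3299 — 2 statements merged into one kernel-verified Lean document; each statement's English description precedes it below -/
import Mathlib

section
/- Let R be a commutative ring and M an R-module equipped with a bilinear form φ. If φ is orthosymmetric, i.e., for all x, y in M, φ(x,y) = 0 if and only if φ(y,x) = 0, and R is an integral domain, then φ is either symmetric or alternating (skew-symmetric with φ(x,x)=0 for all x). -/
theorem stmt_0 {R M : Type*} [CommRing R] [IsDomain R] [AddCommGroup M] [Module R M]
    (φ : M →ₗ[R] M →ₗ[R] R)
    (horth : ∀ x y : M, φ x y = 0 ↔ φ y x = 0) :
    (∀ x y : M, φ x y = φ y x) ∨ (∀ x : M, φ x x = 0) := by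
  -- key identity: φ x y * φ z x = φ x z * φ y x
  have star : ∀ x y z : M, φ x y * φ z x = φ x z * φ y x := by
    intro x y z
    have h0 : φ x (φ x y • z - φ x z • y) = 0 := by
      simp [map_sub, map_smul, smul_eq_mul, mul_comm]
    have h1 : φ (φ x y • z - φ x z • y) x = 0 := (horth _ _).mp h0
    simpa [map_sub, LinearMap.sub_apply, LinearMap.smul_apply, smul_eq_mul,
      sub_eq_zero] using h1
  by_contra h
  push_neg at h
  obtain ⟨⟨a, b, hab⟩, u, hu⟩ := h
  have symm_pt : ∀ w : M, φ w w ≠ 0 → ∀ y : M, φ w y = φ y w := by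
    intro w hw y
    have h1 := star w y w
    exact mul_right_cancel₀ hw (by linear_combination h1)
  have husym := symm_pt u hu
  have hau : φ a u = 0 := by
    have h1 := star a b u
    rw [husym a] at h1
    by_contra hau
    exact hab (mul_left_cancel₀ hau (by linear_combination h1))
  have hua : φ u a = 0 := (husym a).trans hau
  have hbu : φ b u = 0 := by
    have h1 := star b a u
    rw [husym b] at h1
    by_contra hbu
    exact hab (mul_left_cancel₀ hbu (by linear_combination h1)).symm
  have hub : φ u b = 0 := (husym b).trans hbu
  have haa : φ a a = 0 := by
    have h1 := star a b a
    by_contra haa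
    exact hab (mul_left_cancel₀ haa (by linear_combination h1))
  have hvv : φ (u + a) (u + a) ≠ 0 := by
    simp [map_add, LinearMap.add_apply, hau, hua, haa, hu]
  have hvb := symm_pt (u + a) hvv b
  apply hab
  have h2 : φ u b + φ a b = φ b u + φ b a := by
    simpa [map_add, LinearMap.add_apply] using hvb
  rw [hub, hbu] at h2
  simpa using h2
end

section
/- Let φ be a bilinear form on an R-module M over a commutative ring R, with r, s, t ∈ M. If φ is orthosymmetric (φ(x,y)=0 ↔ φ(y,x)=0 for all x,y), then φ(r,t)·φ(s,r) = φ(r,s)·φ(t,r). -/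
theorem stmt_17 {R M : Type*} [CommRing R] [AddCommGroup M] [Module R M]
    (φ : M →ₗ[R] M →ₗ[R] R)
    (horth : ∀ x y : M, φ x y = 0 ↔ φ y x = 0)
    (r s t : M) :
    φ r t * φ s r = φ r s * φ t r := by
  have h : φ r (φ r t • s - φ r s • t) = 0 := by
    simp [mul_comm, sub_eq_zero]
  have h2 := (horth r _).mp h
  simp [sub_eq_zero, smul_eq_mul] at h2
  exact h2
end
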